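/- arXiv:2404.19034 — 2 statements merged into one kernel-verified Lean document; each statement's English description precedes it below -/
import Mathlib

section
/- Let μ > 0 and p > 0. Let f : [0,μ] → ℝ be continuous, twice continuously differentiable on [0,μ), and satisfy f''(x) = ( 2/(x²−μ²) + p² ) f(x) for all x ∈ [0,μ), with f(0) = 0 and f'(0) > 0 (one-sided derivative at 0). Then f(x) > 0 for all 0 < x ≤ μ, and moreover f(x) ≥ 0.13 · f'(0) · sinh(px)/p for all 0 ≤ x ≤ μ. -/
/-!
Sturm comparison with the explicit subsolution `φ(x) = sinh(px)/p · (1/3 + (2/3)√(μ² − x²)/μ)`: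
it satisfies `φ'' ≤ (2/(x² − μ²) + p²) φ` on `[0, μ)`, with `φ(0) = 0` and `φ'(0) = 1`. As long
as `f ≥ 0`, the Wronskian `f'φ − fφ'` is nondecreasing from `0`, so `f/φ` is nondecreasing and
stays above its limit `f'(0)` at `0⁺`. Hence `f ≥ f'(0) φ > 0` up to the first zero of `f`, so
there is no zero, and `φ ≥ sinh(px)/(3p)` gives the lower bound.
-/

open Set Filter Topology Real

theorem exists_first_nonpos_of_eventually_pos {f : ℝ → ℝ} {a b x₁ : ℝ}
    (hf : ContinuousOn f (Ioc a b)) (hpos : ∀ᶠ x in 𝓝[>] a, 0 < f x)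
    (hx₁ : x₁ ∈ Ioc a b) (hfx₁ : f x₁ ≤ 0) :
    ∃ x₀ ∈ Ioc a b, f x₀ ≤ 0 ∧ ∀ x ∈ Ioo a x₀, 0 < f x := by
  obtain ⟨δ, hδa, hδ⟩ := mem_nhdsGT_iff_exists_Ioo_subset.mp hpos
  have hδ_le : ∀ x ∈ Ioc a b, f x ≤ 0 → δ ≤ x := fun x hx hfx =>
    not_lt.mp fun hxδ => hfx.not_gt (hδ ⟨hx.1, hxδ⟩)
  set A := Icc δ x₁ ∩ f ⁻¹' Iic 0
  have hA : IsClosed A :=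
    (hf.mono (Icc_subset_Ioc hδa hx₁.2)).preimage_isClosed_of_isClosed isClosed_Icc isClosed_Iic
  have hA_bdd : BddBelow A := ⟨δ, fun x hx => hx.1.1⟩
  have hx₀ : sInf A ∈ A := hA.csInf_mem ⟨x₁, ⟨hδ_le x₁ hx₁ hfx₁, le_rfl⟩, hfx₁⟩ hA_bdd
  refine ⟨sInf A, ⟨hδa.trans_le hx₀.1.1, hx₀.1.2.trans hx₁.2⟩, hx₀.2, fun x hx => ?_⟩
  by_contra! hfx
  have hxb : x ≤ b := hx.2.le.trans (hx₀.1.2.trans hx₁.2)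
  have hxA : x ∈ A := ⟨⟨hδ_le x ⟨hx.1, hxb⟩ hfx, hx.2.le.trans hx₀.1.2⟩, hfx⟩
  exact hx.2.not_ge (csInf_le hA_bdd hxA)

theorem tendsto_div_nhdsGT_of_hasDerivWithinAt {f g : ℝ → ℝ} {a c d : ℝ}
    (hf : HasDerivWithinAt f c (Ioi a) a) (hg : HasDerivWithinAt g d (Ioi a) a)
    (hfa : f a = 0) (hga : g a = 0) (hd : d ≠ 0) :
    Tendsto (fun x => f x / g x) (𝓝[>] a) (𝓝 (c / d)) := by
  rw [hasDerivWithinAt_iff_tendsto_slope, sdiff_singleton_eq_self self_notMem_Ioi] at hf hg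
  refine (hf.div hg hd).congr' (eventually_nhdsWithin_of_forall fun x (hx : a < x) => ?_)
  rw [Pi.div_apply, slope_def_field, slope_def_field, hfa, hga, sub_zero, sub_zero]
  exact div_div_div_cancel_right₀ (sub_ne_zero.2 hx.ne') _ _

theorem MonotoneOn.le_of_tendsto_nhdsGT {g : ℝ → ℝ} {a b c x : ℝ} (hg : MonotoneOn g (Ioo a b))
    (hc : Tendsto g (𝓝[>] a) (𝓝 c)) (hx : x ∈ Ioo a b) : c ≤ g x := by
  refine le_of_tendsto hc ?_
  filter_upwards [Ioo_mem_nhdsGT hx.1] with y hy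
  exact hg ⟨hy.1, hy.2.trans hx.2⟩ hx hy.2.le

theorem ContDiffOn.hasDerivAt_derivWithin_Ico {f : ℝ → ℝ} {n : WithTop ℕ∞} {a b x : ℝ}
    (hf : ContDiffOn ℝ n f (Ico a b)) (hn : n ≠ 0) (hx : x ∈ Ioo a b) :
    HasDerivAt f (derivWithin f (Ico a b) x) x :=
  (hf.differentiableOn hn x (Ioo_subset_Ico_self hx)).hasDerivWithinAt.hasDerivAt
    (Ico_mem_nhds hx.1 hx.2)

section Wronskian

variable {f f' φ φ' φ'' q : ℝ → ℝ} {a b : ℝ}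

theorem monotoneOn_wronskian_of_subsolution
    (hW : ContinuousOn (fun x => f' x * φ x - f x * φ' x) (Ico a b))
    (hf : ∀ x ∈ Ioo a b, HasDerivAt f (f' x) x)
    (hf' : ∀ x ∈ Ioo a b, HasDerivAt f' (q x * f x) x)
    (hφ : ∀ x ∈ Ioo a b, HasDerivAt φ (φ' x) x)
    (hφ' : ∀ x ∈ Ioo a b, HasDerivAt φ' (φ'' x) x)
    (hsub : ∀ x ∈ Ioo a b, φ'' x ≤ q x * φ x)
    (hf_nonneg : ∀ x ∈ Ioo a b, 0 ≤ f x) :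
    MonotoneOn (fun x => f' x * φ x - f x * φ' x) (Ico a b) := by
  refine monotoneOn_of_hasDerivWithinAt_nonneg (convex_Ico a b) hW
    (f' := fun x => f x * (q x * φ x - φ'' x)) (fun x hx => ?_) fun x hx => ?_ <;>
    simp only [interior_Ico] at hx ⊢
  · exact (((hf' x hx).mul (hφ x hx)).sub ((hf x hx).mul (hφ' x hx))).hasDerivWithinAt.congr_deriv
      (by ring)
  · exact mul_nonneg (hf_nonneg x hx) (sub_nonneg.2 (hsub x hx))

theorem monotoneOn_div_of_wronskian_nonneg
    (hf : ∀ x ∈ Ioo a b, HasDerivAt f (f' x) x)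
    (hφ : ∀ x ∈ Ioo a b, HasDerivAt φ (φ' x) x)
    (hφ_pos : ∀ x ∈ Ioo a b, 0 < φ x)
    (hW : ∀ x ∈ Ioo a b, 0 ≤ f' x * φ x - f x * φ' x) :
    MonotoneOn (fun x => f x / φ x) (Ioo a b) := by
  have hdiv : ∀ x ∈ Ioo a b, HasDerivAt (fun x => f x / φ x)
      ((f' x * φ x - f x * φ' x) / φ x ^ 2) x :=
    fun x hx => (hf x hx).div (hφ x hx) (hφ_pos x hx).ne'
  refine monotoneOn_of_hasDerivWithinAt_nonneg (convex_Ioo a b)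
    (f' := fun x => (f' x * φ x - f x * φ' x) / φ x ^ 2)
    (fun x hx => (hdiv x hx).continuousAt.continuousWithinAt) (fun x hx => ?_) fun x hx => ?_ <;>
    simp only [interior_Ioo] at hx ⊢
  · exact (hdiv x hx).hasDerivWithinAt
  · exact div_nonneg (hW x hx) (sq_nonneg _)

theorem mul_le_of_subsolution {c : ℝ} (hab : a < b)
    (hfc : ContinuousOn f (Icc a b)) (hφc : ContinuousOn φ (Icc a b))
    (hW : ContinuousOn (fun x => f' x * φ x - f x * φ' x) (Ico a b))
    (hf : ∀ x ∈ Ioo a b, HasDerivAt f (f' x) x)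
    (hf' : ∀ x ∈ Ioo a b, HasDerivAt f' (q x * f x) x)
    (hφ : ∀ x ∈ Ioo a b, HasDerivAt φ (φ' x) x)
    (hφ' : ∀ x ∈ Ioo a b, HasDerivAt φ' (φ'' x) x)
    (hsub : ∀ x ∈ Ioo a b, φ'' x ≤ q x * φ x)
    (hφ_pos : ∀ x ∈ Ioo a b, 0 < φ x) (hfa : f a = 0) (hφa : φ a = 0)
    (hlim : Tendsto (fun x => f x / φ x) (𝓝[>] a) (𝓝 c))
    (hf_nonneg : ∀ x ∈ Ioo a b, 0 ≤ f x) :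
    ∀ x ∈ Icc a b, c * φ x ≤ f x := by
  have hW_mono := monotoneOn_wronskian_of_subsolution hW hf hf' hφ hφ' hsub hf_nonneg
  have hW_nonneg (x) (hx : x ∈ Ioo a b) : 0 ≤ f' x * φ x - f x * φ' x := by
    simpa [hfa, hφa] using hW_mono (left_mem_Ico.2 hab) (Ioo_subset_Ico_self hx) hx.1.le
  have hratio := monotoneOn_div_of_wronskian_nonneg hf hφ hφ_pos hW_nonneg
  have hIoo (x) (hx : x ∈ Ioo a b) : c * φ x ≤ f x :=
    (le_div_iff₀ (hφ_pos x hx)).1 (hratio.le_of_tendsto_nhdsGT hlim hx)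
  rw [← closure_Ioo hab.ne] at hfc hφc ⊢
  exact le_on_closure hIoo (continuousOn_const.mul hφc) hfc

end Wronskian

theorem Real.sinh_le_mul_cosh {x : ℝ} (hx : 0 ≤ x) : sinh x ≤ x * cosh x := by
  have hmono : Monotone fun t => t * cosh t - sinh t := by
    refine monotone_of_hasDerivAt_nonneg (f' := fun t => t * sinh t) (fun t => ?_) fun t => ?_
    · exact (((hasDerivAt_id t).mul (hasDerivAt_cosh t)).sub (hasDerivAt_sinh t)).congr_deriv
        (by simp)
    · rcases le_total 0 t with ht | ht
      · exact mul_nonneg ht (sinh_nonneg_iff.2 ht)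
      · exact mul_nonneg_of_nonpos_of_nonpos ht (sinh_nonpos_iff.2 ht)
  simpa using hmono hx

namespace Subsolution

variable (μ p : ℝ)

noncomputable def weight (x : ℝ) : ℝ := 1 / 3 + 2 / 3 * √(μ ^ 2 - x ^ 2) / μ

noncomputable def weight' (x : ℝ) : ℝ := -2 * x / (3 * μ * √(μ ^ 2 - x ^ 2))

noncomputable def weight'' (x : ℝ) : ℝ := -(2 * μ) / (3 * √(μ ^ 2 - x ^ 2) ^ 3)

noncomputable def phi (x : ℝ) : ℝ := sinh (p * x) / p * weight μ x

noncomputable def phi' (x : ℝ) : ℝ :=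
  cosh (p * x) * weight μ x + sinh (p * x) / p * weight' μ x

noncomputable def phi'' (x : ℝ) : ℝ :=
  p ^ 2 * phi μ p x + 2 * cosh (p * x) * weight' μ x + sinh (p * x) / p * weight'' μ x

variable {μ p}

theorem hasDerivAt_sqrt_sq_sub {x : ℝ} (hx : x ^ 2 < μ ^ 2) :
    HasDerivAt (fun y => √(μ ^ 2 - y ^ 2)) (-x / √(μ ^ 2 - x ^ 2)) x := by
  have h := ((hasDerivAt_pow 2 x).const_sub (μ ^ 2)).sqrt (sub_ne_zero.2 hx.ne')
  refine h.congr_deriv ?_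
  have : √(μ ^ 2 - x ^ 2) ≠ 0 := (Real.sqrt_pos.2 (sub_pos.2 hx)).ne'
  field_simp
  ring

theorem hasDerivAt_weight {x : ℝ} (hx : x ^ 2 < μ ^ 2) :
    HasDerivAt (weight μ) (weight' μ x) x := by
  refine ((((hasDerivAt_sqrt_sq_sub hx).const_mul (2 / 3)).div_const μ).const_add
    (1 / 3)).congr_deriv ?_
  have : √(μ ^ 2 - x ^ 2) ≠ 0 := (Real.sqrt_pos.2 (sub_pos.2 hx)).ne'
  unfold weight'
  field_simp

theorem hasDerivAt_weight' (hμ : 0 < μ) {x : ℝ} (hx : x ^ 2 < μ ^ 2) :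
    HasDerivAt (weight' μ) (weight'' μ x) x := by
  have hr : 0 < √(μ ^ 2 - x ^ 2) := Real.sqrt_pos.2 (sub_pos.2 hx)
  have hr_sq : √(μ ^ 2 - x ^ 2) ^ 2 = μ ^ 2 - x ^ 2 := Real.sq_sqrt (sub_pos.2 hx).le
  refine (((hasDerivAt_id' x).const_mul (-2)).div
    ((hasDerivAt_sqrt_sq_sub hx).const_mul (3 * μ)) (by positivity)).congr_deriv ?_
  unfold weight''
  field_simp
  linear_combination (-1) * hr_sq

theorem hasDerivAt_sinh_mul_div (hp : p ≠ 0) (x : ℝ) :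
    HasDerivAt (fun y => sinh (p * y) / p) (cosh (p * x)) x := by
  refine (((hasDerivAt_id' x).const_mul p).sinh.div_const p).congr_deriv ?_
  field_simp

theorem hasDerivAt_phi (hp : p ≠ 0) {x : ℝ} (hx : x ^ 2 < μ ^ 2) :
    HasDerivAt (phi μ p) (phi' μ p x) x :=
  (hasDerivAt_sinh_mul_div hp x).mul (hasDerivAt_weight hx)

theorem hasDerivAt_phi' (hμ : 0 < μ) (hp : p ≠ 0) {x : ℝ} (hx : x ^ 2 < μ ^ 2) :
    HasDerivAt (phi' μ p) (phi'' μ p x) x := by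
  have hcosh : HasDerivAt (fun y => cosh (p * y)) (sinh (p * x) * p) x := by
    simpa using ((hasDerivAt_id' x).const_mul p).cosh
  refine ((hcosh.mul (hasDerivAt_weight hx)).add
    ((hasDerivAt_sinh_mul_div hp x).mul (hasDerivAt_weight' hμ hx))).congr_deriv ?_
  unfold phi'' phi
  field_simp
  ring

theorem continuous_phi : Continuous (phi μ p) := by
  unfold phi weight
  fun_prop

theorem phi_zero : phi μ p 0 = 0 := by simp [phi]

theorem phi'_zero (hμ : 0 < μ) : phi' μ p 0 = 1 := by
  simp [phi', weight, Real.sqrt_sq hμ.le, hμ.ne']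
  norm_num

theorem div_three_le_phi (hμ : 0 < μ) (hp : 0 < p) {x : ℝ} (hx : 0 ≤ x) :
    sinh (p * x) / p / 3 ≤ phi μ p x := by
  have hS : 0 ≤ sinh (p * x) / p := div_nonneg (sinh_nonneg_iff.2 (by positivity)) hp.le
  have hw : 1 / 3 ≤ weight μ x := le_add_of_nonneg_right (div_nonneg (by positivity) hμ.le)
  unfold phi
  nlinarith

theorem phi_pos (hμ : 0 < μ) (hp : 0 < p) {x : ℝ} (hx : 0 < x) : 0 < phi μ p x :=
  (div_pos (div_pos (sinh_pos_iff.2 (by positivity)) hp) three_pos).trans_le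
    (div_three_le_phi hμ hp hx.le)

theorem phi''_le (hμ : 0 < μ) (hp : 0 < p) {x : ℝ} (hx : x ∈ Ico 0 μ) :
    phi'' μ p x ≤ (2 / (x ^ 2 - μ ^ 2) + p ^ 2) * phi μ p x := by
  rw [← sub_nonneg]
  unfold phi'' phi weight weight' weight''
  have hd : 0 < μ ^ 2 - x ^ 2 := by nlinarith [hx.1, hx.2]
  set r := √(μ ^ 2 - x ^ 2)
  set S := sinh (p * x) / p
  set C := cosh (p * x)
  have hr : 0 < r := Real.sqrt_pos.2 hd
  have hr_sq : r ^ 2 = μ ^ 2 - x ^ 2 := Real.sq_sqrt hd.le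
  have hr_le : r ≤ μ := (Real.sqrt_le_sqrt (by nlinarith)).trans_eq (Real.sqrt_sq hμ.le)
  have hS : 0 ≤ S := div_nonneg (sinh_nonneg_iff.2 (by nlinarith [hx.1])) hp.le
  have hSC : S ≤ x * C := by
    rw [div_le_iff₀ hp]
    nlinarith [sinh_le_mul_cosh (mul_nonneg hp.le hx.1)]
  rw [show x ^ 2 - μ ^ 2 = -r ^ 2 by rw [hr_sq]; ring]
  convert_to 0 ≤ (4 * r ^ 2 * (x * C - S) + 2 * μ * S * (μ - r)) / (3 * μ * r ^ 3) using 1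
  · field_simp
    ring
  have := sub_nonneg.2 hSC
  have := sub_nonneg.2 hr_le
  positivity

theorem tendsto_div_phi {c : ℝ} (hμ : 0 < μ) (hp : p ≠ 0) {f : ℝ → ℝ}
    (hf : HasDerivWithinAt f c (Ioi 0) 0) (hf0 : f 0 = 0) :
    Tendsto (fun x => f x / phi μ p x) (𝓝[>] 0) (𝓝 c) := by
  have hphi := (hasDerivAt_phi hp (x := 0) (by simpa using pow_pos hμ 2)).hasDerivWithinAt
    (s := Ioi 0)
  rw [phi'_zero hμ] at hphi
  simpa using tendsto_div_nhdsGT_of_hasDerivWithinAt hf hphi hf0 phi_zero one_ne_zero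

theorem mul_phi_le_of_ode {c : ℝ} {f f' : ℝ → ℝ} (hμ : 0 < μ) (hp : 0 < p) (hc : 0 < c)
    (hfc : ContinuousOn f (Icc 0 μ)) (hf'c : ContinuousOn f' (Ico 0 μ))
    (hf : ∀ x ∈ Ioo 0 μ, HasDerivAt f (f' x) x)
    (hf' : ∀ x ∈ Ioo 0 μ, HasDerivAt f' ((2 / (x ^ 2 - μ ^ 2) + p ^ 2) * f x) x)
    (hf0 : f 0 = 0) (hf'0 : HasDerivWithinAt f c (Ioi 0) 0) :
    ∀ x ∈ Icc 0 μ, c * phi μ p x ≤ f x := by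
  have hsq {x : ℝ} (hx : x ∈ Ico 0 μ) : x ^ 2 < μ ^ 2 := by nlinarith [hx.1, hx.2]
  have hW : ContinuousOn (fun x => f' x * phi μ p x - f x * phi' μ p x) (Ico 0 μ) :=
    (hf'c.mul continuous_phi.continuousOn).sub ((hfc.mono Ico_subset_Icc_self).mul fun x hx =>
      (hasDerivAt_phi' hμ hp.ne' (hsq hx)).continuousAt.continuousWithinAt)
  have hlim := tendsto_div_phi hμ hp.ne' hf'0 hf0
  have hbound (b) (hb : b ∈ Ioc 0 μ) (hf_nonneg : ∀ x ∈ Ioo 0 b, 0 ≤ f x) :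
      ∀ x ∈ Icc 0 b, c * phi μ p x ≤ f x := by
    have hIoo : Ioo 0 b ⊆ Ico 0 μ := (Ioo_subset_Ioo_right hb.2).trans Ioo_subset_Ico_self
    exact mul_le_of_subsolution hb.1 (hfc.mono (Icc_subset_Icc_right hb.2))
      continuous_phi.continuousOn (hW.mono (Ico_subset_Ico_right hb.2))
      (fun x hx => hf x ⟨hx.1, hx.2.trans_le hb.2⟩) (fun x hx => hf' x ⟨hx.1, hx.2.trans_le hb.2⟩)
      (fun x hx => hasDerivAt_phi hp.ne' (hsq (hIoo hx)))
      (fun x hx => hasDerivAt_phi' hμ hp.ne' (hsq (hIoo hx)))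
      (fun x hx => phi''_le hμ hp (hIoo hx)) (fun x hx => phi_pos hμ hp hx.1) hf0 phi_zero hlim
      hf_nonneg
  have hpos : ∀ x ∈ Ioc 0 μ, 0 < f x := by
    by_contra! ⟨x₁, hx₁, hfx₁⟩
    have hpos_near : ∀ᶠ x in 𝓝[>] 0, 0 < f x := by
      filter_upwards [hlim.eventually (eventually_gt_nhds hc), self_mem_nhdsWithin] with x hx hx0
      exact (div_pos_iff_of_pos_right (phi_pos hμ hp hx0)).1 hx
    obtain ⟨x₀, hx₀, hfx₀, hpos⟩ :=
      exists_first_nonpos_of_eventually_pos (hfc.mono Ioc_subset_Icc_self) hpos_near hx₁ hfx₁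
    have := hbound x₀ hx₀ (fun x hx => (hpos x hx).le) x₀ ⟨hx₀.1.le, le_rfl⟩
    nlinarith [mul_pos hc (phi_pos hμ hp hx₀.1)]
  exact hbound μ ⟨hμ, le_rfl⟩ fun x hx => (hpos x ⟨hx.1, hx.2.le⟩).le

end Subsolution

open Subsolution in
/-- Positivity up to the singular point for the left ODE
`f'' = (2/(x²−μ²) + p²) f` on `[0,μ)` with `f(0)=0`, `f'(0)>0`: then `f > 0` on `(0,μ]`
and `f(x) ≥ 0.13 · f'(0) · sinh(px)/p` on `[0,μ]`. -/
theorem statement4 (μ p : ℝ) (hμ : 0 < μ) (hp : 0 < p) (f : ℝ → ℝ)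
    (hfc : ContinuousOn f (Set.Icc 0 μ))
    (hf2 : ContDiffOn ℝ 2 f (Set.Ico 0 μ))
    (hode : ∀ x ∈ Set.Ico (0:ℝ) μ,
      iteratedDerivWithin 2 f (Set.Ico 0 μ) x = (2 / (x ^ 2 - μ ^ 2) + p ^ 2) * f x)
    (hf0 : f 0 = 0) (hf'0 : 0 < derivWithin f (Set.Ico 0 μ) 0) :
    (∀ x, 0 < x → x ≤ μ → 0 < f x) ∧
    (∀ x ∈ Set.Icc (0:ℝ) μ,
      0.13 * derivWithin f (Set.Ico 0 μ) 0 * (Real.sinh (p * x) / p) ≤ f x) := by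
  set f' := derivWithin f (Ico 0 μ)
  have hf'_deriv (x) (hx : x ∈ Ioo 0 μ) :
      HasDerivAt f' ((2 / (x ^ 2 - μ ^ 2) + p ^ 2) * f x) x := by
    rw [← hode x (Ioo_subset_Ico_self hx), iteratedDerivWithin_succ, iteratedDerivWithin_one]
    exact (hf2.derivWithin (uniqueDiffOn_Ico 0 μ) (m := 1) le_rfl).hasDerivAt_derivWithin_Ico
      one_ne_zero hx
  have hf'0_within : HasDerivWithinAt f (f' 0) (Ioi 0) 0 :=
    (hf2.differentiableOn two_ne_zero 0 ⟨le_rfl, hμ⟩).hasDerivWithinAt.mono_of_mem_nhdsWithin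
      (Ico_mem_nhdsGT hμ)
  have hbound := mul_phi_le_of_ode hμ hp hf'0 hfc
    (hf2.continuousOn_derivWithin (uniqueDiffOn_Ico 0 μ) (by norm_num))
    (fun x => hf2.hasDerivAt_derivWithin_Ico two_ne_zero) hf'_deriv hf0 hf'0_within
  refine ⟨fun x hx hxμ => (mul_pos hf'0 (phi_pos hμ hp hx)).trans_le (hbound x ⟨hx.le, hxμ⟩),
    fun x hx => ?_⟩
  have hS : 0 ≤ sinh (p * x) / p := div_nonneg (sinh_nonneg_iff.2 (by nlinarith [hx.1])) hp.le
  calc 0.13 * f' 0 * (sinh (p * x) / p) ≤ f' 0 * (sinh (p * x) / p / 3) := by nlinarith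
    _ ≤ f' 0 * phi μ p x := by gcongr; exact div_three_le_phi hμ hp hx.1
    _ ≤ f x := hbound x hx
end

section
/- Let μ > 1/2 and p > 0. If f ∈ C²([0,1/2]) satisfies f''(x) = ( 2/(x²−μ²) + p² ) f(x) for all x ∈ [0,1/2] and f(0) = 0 = f(1/2), then f(x) = 0 for all x ∈ [0,1/2]. -/
/-!
The weight `w x = 2x/(x² − μ²)` is the logarithmic derivative of `u x = x² − μ²`, which has no
zero on `[0, 1/2]`, and solves the Riccati equation `w' + w² = u''/u = 2/(x² − μ²)`. For a
solution of `f'' = (w' + w² + p²) f` the quantity `f f' − w f²` therefore has derivative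
`(f' − w f)² + p² f² ≥ 0`, and it vanishes at both ends, where `f` does. So it is constant and its
derivative vanishes, which forces `f = 0`.
-/

open Set

theorem HasDerivWithinAt.riccati_energy {s : Set ℝ} {f f' w q : ℝ → ℝ} {c x : ℝ}
    (hf : HasDerivWithinAt f (f' x) s x) (hf' : HasDerivWithinAt f' ((q x + c) * f x) s x)
    (hw : HasDerivWithinAt w (q x - w x ^ 2) s x) :
    HasDerivWithinAt (fun y => f y * f' y - w y * f y ^ 2)
      ((f' x - w x * f x) ^ 2 + c * f x ^ 2) s x := by
  refine ((hf.mul hf').sub (hw.mul (hf.fun_pow 2))).congr_deriv ?_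
  simp only [Nat.cast_ofNat, Nat.add_one_sub_one, pow_one]
  ring

theorem eq_zero_of_hasDerivWithinAt_Icc_of_nonneg {F G : ℝ → ℝ} {a b x : ℝ}
    (hF : ∀ y ∈ Icc a b, HasDerivWithinAt F (G y) (Icc a b) y) (hG : ∀ y ∈ Ioo a b, 0 ≤ G y)
    (hab : F a = F b) (hx : x ∈ Ioo a b) : G x = 0 := by
  have hmono : MonotoneOn F (Icc a b) := by
    refine monotoneOn_of_hasDerivWithinAt_nonneg (convex_Icc a b)
      (fun y hy => (hF y hy).continuousWithinAt) (fun y hy => ?_) (by simpa using hG)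
    rw [interior_Icc] at hy ⊢
    exact (hF y (Ioo_subset_Icc_self hy)).mono Ioo_subset_Icc_self
  have hconst : ∀ y ∈ Icc a b, F y = F a := fun y hy =>
    le_antisymm (hab ▸ hmono hy (right_mem_Icc.2 (hy.1.trans hy.2)) hy.2)
      (hmono (left_mem_Icc.2 (hy.1.trans hy.2)) hy hy.1)
  have hnhds : Icc a b ∈ nhds x := Icc_mem_nhds hx.1 hx.2
  have hzero : HasDerivAt F 0 x :=
    (hasDerivAt_const x (F a)).congr_of_eventuallyEq (Filter.mem_of_superset hnhds hconst)
  exact ((hF x (Ioo_subset_Icc_self hx)).hasDerivAt hnhds).unique hzero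

theorem eqOn_zero_of_riccati {a b c : ℝ} (hc : 0 < c) {f f' w q : ℝ → ℝ}
    (hf : ∀ x ∈ Icc a b, HasDerivWithinAt f (f' x) (Icc a b) x)
    (hf' : ∀ x ∈ Icc a b, HasDerivWithinAt f' ((q x + c) * f x) (Icc a b) x)
    (hw : ∀ x ∈ Icc a b, HasDerivWithinAt w (q x - w x ^ 2) (Icc a b) x)
    (ha : f a = 0) (hb : f b = 0) : EqOn f 0 (Icc a b) := by
  intro x hx
  rcases hx.1.eq_or_lt with rfl | hax
  · exact ha
  rcases hx.2.eq_or_lt with rfl | hxb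
  · exact hb
  have henergy := eq_zero_of_hasDerivWithinAt_Icc_of_nonneg
    (fun y hy => (hf y hy).riccati_energy (hf' y hy) (hw y hy))
    (fun y _ => by positivity) (by simp [ha, hb]) ⟨hax, hxb⟩
  have hsq : f x ^ 2 = 0 := by nlinarith [sq_nonneg (f' x - w x * f x), sq_nonneg (f x)]
  exact pow_eq_zero_iff two_ne_zero |>.1 hsq

theorem hasDerivAt_two_mul_div_sq_sub_sq {μ x : ℝ} (hx : x ^ 2 - μ ^ 2 ≠ 0) :
    HasDerivAt (fun y => 2 * y / (y ^ 2 - μ ^ 2))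
      (2 / (x ^ 2 - μ ^ 2) - (2 * x / (x ^ 2 - μ ^ 2)) ^ 2) x := by
  refine (((hasDerivAt_id' x).const_mul 2).fun_div
    (((hasDerivAt_id' x).fun_pow 2).sub_const (μ ^ 2)) hx).congr_deriv ?_
  simp only [Nat.cast_ofNat, Nat.add_one_sub_one, pow_one]
  field_simp

theorem ContDiffOn.hasDerivWithinAt_derivWithin {𝕜 E : Type*} [NontriviallyNormedField 𝕜]
    [NormedAddCommGroup E] [NormedSpace 𝕜 E] {f : 𝕜 → E} {s : Set 𝕜} {x : 𝕜}
    (hf : ContDiffOn 𝕜 2 f s) (hs : UniqueDiffOn 𝕜 s) (hx : x ∈ s) :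
    HasDerivWithinAt (derivWithin f s) (iteratedDerivWithin 2 f s x) s x := by
  rw [iteratedDerivWithin_eq_iterate]
  exact ((hf.derivWithin hs (by norm_num)).differentiableOn one_ne_zero x hx).hasDerivWithinAt

/-- Uniqueness for the Dirichlet problem on `[0,1/2]`: if `μ > 1/2`, `p > 0` and
`f ∈ C²([0,1/2])` satisfies `f'' = (2/(x²−μ²) + p²) f` with `f(0) = f(1/2) = 0`,
then `f ≡ 0` on `[0,1/2]`. -/
theorem statement8 (μ p : ℝ) (hμ : 1 / 2 < μ) (hp : 0 < p) (f : ℝ → ℝ)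
    (hf : ContDiffOn ℝ 2 f (Set.Icc 0 (1 / 2)))
    (hode : ∀ x ∈ Set.Icc (0:ℝ) (1 / 2),
      iteratedDerivWithin 2 f (Set.Icc 0 (1 / 2)) x = (2 / (x ^ 2 - μ ^ 2) + p ^ 2) * f x)
    (h0 : f 0 = 0) (h12 : f (1 / 2) = 0) :
    ∀ x ∈ Set.Icc (0:ℝ) (1 / 2), f x = 0 := by
  have hs : UniqueDiffOn ℝ (Icc (0:ℝ) (1 / 2)) := uniqueDiffOn_Icc (by norm_num)
  refine eqOn_zero_of_riccati (pow_pos hp 2) (f' := derivWithin f (Icc 0 (1 / 2)))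
    (q := fun x => 2 / (x ^ 2 - μ ^ 2))
    (w := fun x => 2 * x / (x ^ 2 - μ ^ 2)) (fun x hx => ?_) (fun x hx => ?_) (fun x hx => ?_)
    h0 h12
  · exact (hf.differentiableOn (by norm_num) x hx).hasDerivWithinAt
  · exact hode x hx ▸ hf.hasDerivWithinAt_derivWithin hs hx
  · have hne : x ^ 2 - μ ^ 2 ≠ 0 := by nlinarith [hx.1, hx.2]
    exact (hasDerivAt_two_mul_div_sq_sub_sq hne).hasDerivWithinAt
end
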